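/- Let s ≥ 2 be an integer and set d = s³ + s² − s − 2, so d+1 = (s−1)(s+1)² = (s−1) + (s²−2s) + s³. Let 𝔅 be a family of s²-element subsets of {1, …, s³} with |𝔅| = s³ + s² + s such that |B₁ ∩ B₂| ∈ {0, s} for all distinct B₁, B₂ ∈ 𝔅. For each B ∈ 𝔅 let v_B ∈ H_d be the point whose i-th coordinate equals 1/(s+1) for i ∈ {1, …, s−1} ∪ {s² − s − 1 + j : j ∈ B} and equals −1/(s(s+1)) otherwise, and let 𝔅' = {v_B : B ∈ 𝔅}. Let x₀ ∈ H_d be the point whose first s² − s − 1 coordinates equal −1/(s+1) and whose last s³ coordinates equal 1/(s(s+1)). Then R_d ∪ 𝔅' ∪ {x₀} is a 2-distance set in H_d with exactly the two distances √2 and √(2(s−1)/s), and it has exactly 2s²(s+1) points. -/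

import Mathlib

noncomputable section

open scoped BigOperators Classical

/-- The set of Euclidean distances between distinct points of `X`. -/
def distSet {m : ℕ} (X : Set (EuclideanSpace ℝ (Fin m))) : Set ℝ :=
  {r | ∃ x ∈ X, ∃ y ∈ X, x ≠ y ∧ dist x y = r}

/-- `X` is a 2-distance set: exactly two distances occur between distinct points. -/
def IsTwoDistSet {m : ℕ} (X : Set (EuclideanSpace ℝ (Fin m))) : Prop :=
  (distSet X).ncard = 2

/-- The affine hyperplane `H_d = {x ∈ ℝ^{d+1} : ∑ x_i = 1}`. -/
def Hplane (d : ℕ) : Set (EuclideanSpace ℝ (Fin (d+1))) :=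
  {x | ∑ i, x i = 1}

/-- The regular simplex `R_d`: the standard basis vectors of `ℝ^{d+1}`. -/
def simplex (d : ℕ) : Set (EuclideanSpace ℝ (Fin (d+1))) :=
  Set.range (fun i => EuclideanSpace.single i (1:ℝ))

/-- The constant `c = (1 - (d+1-k)β)/(d+1)`. -/
def cval (d k : ℕ) (β : ℝ) : ℝ := (1 - ((d:ℝ) + 1 - (k:ℝ)) * β) / ((d:ℝ) + 1)

/-- The set `T_d(k,β)` of points of `H_d` all of whose coordinates lie in `{c, c+β}`,
with exactly `k` coordinates equal to `c`. -/
def Tset (d k : ℕ) (β : ℝ) : Set (EuclideanSpace ℝ (Fin (d+1))) :=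
  {x | x ∈ Hplane d ∧ (∀ i, x i = cval d k β ∨ x i = cval d k β + β) ∧
    {i | x i = cval d k β}.ncard = k}

/-- The point `v_B ∈ H_d`, `d = s³+s²-s-2`, attached to a block `B ⊆ {1,…,s³}`:
its `i`-th coordinate (1-indexed) is `1/(s+1)` for `i ∈ {1,…,s-1} ∪ {s²-s-1+j : j ∈ B}`
and `-1/(s(s+1))` otherwise.  Coordinates here are 0-indexed, and a block element
`j : Fin (s³)` stands for the point `j+1 ∈ {1,…,s³}`. -/
def designVec (s : ℕ) (B : Finset (Fin (s^3))) :
    EuclideanSpace ℝ (Fin (s^3+s^2-s-2+1)) :=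
  WithLp.toLp 2 fun (i : Fin (s^3+s^2-s-2+1)) => if (i : ℕ) < s - 1 ∨ ∃ j ∈ B, (i : ℕ) = s^2 - s - 1 + (j : ℕ)
    then 1/((s:ℝ)+1) else -(1/((s:ℝ)*((s:ℝ)+1)))

/-- The point `x₀ ∈ H_d` whose first `s²-s-1` coordinates equal `-1/(s+1)` and whose
last `s³` coordinates equal `1/(s(s+1))`. -/
def x0vec (s : ℕ) : EuclideanSpace ℝ (Fin (s^3+s^2-s-2+1)) :=
  WithLp.toLp 2 fun (i : Fin (s^3+s^2-s-2+1)) => if (i : ℕ) < s^2 - s - 1 then -(1/((s:ℝ)+1)) else 1/((s:ℝ)*((s:ℝ)+1))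


/-!
Every point of the configuration is two-valued: it takes one value on a support set of
coordinates and another off it. The distance between two such points therefore depends only on
the sizes of the two supports and of their intersection (`dist_twoValued`). The supports of the
`v_B` share the first `s - 1` coordinates and otherwise copy the blocks, so two of them meet in
`s - 1 + |B₁ ∩ B₂|` coordinates, and the intersection numbers `0` and `s` of the design give
exactly the distances `√2` and `√(2(s-1)/s)`. Both are positive, so the same computation shows
that the `2s²(s+1)` listed points are pairwise distinct.
-/

open Finset

section TwoValued

variable {ι : Type*} [Fintype ι] [DecidableEq ι]

def twoValued (S : Finset ι) (u w : ℝ) : EuclideanSpace ℝ ι :=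
  WithLp.toLp 2 fun i => if i ∈ S then u else w

omit [Fintype ι] in
@[simp] lemma twoValued_apply (S : Finset ι) (u w : ℝ) (i : ι) :
    twoValued S u w i = if i ∈ S then u else w := rfl

omit [Fintype ι] in
lemma single_one_eq_twoValued (k : ι) :
    EuclideanSpace.single k (1 : ℝ) = twoValued {k} 1 0 := by
  ext i
  simp [eq_comm]

lemma sum_twoValued (S : Finset ι) (u w : ℝ) :
    ∑ i, twoValued S u w i = #S * u + (Fintype.card ι - #S) * w := by
  simp only [twoValued_apply, sum_ite, sum_const, nsmul_eq_mul, filter_mem_eq_inter, univ_inter]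
  rw [← card_univ, ← card_filter_add_card_filter_not (s := univ) (· ∈ S)]
  simp

lemma dist_twoValued (S T : Finset ι) (u w u' w' : ℝ) :
    dist (twoValued S u w) (twoValued T u' w') =
      √(#(S ∩ T) * (u - u') ^ 2 + (#S - #(S ∩ T)) * (u - w') ^ 2
        + (#T - #(S ∩ T)) * (w - u') ^ 2
        + (Fintype.card ι - #S - #T + #(S ∩ T)) * (w - w') ^ 2) := by
  rw [EuclideanSpace.dist_eq]
  congr 1
  have regions : ∀ i, dist (twoValued S u w i) (twoValued T u' w' i) ^ 2 =
      if i ∈ S then (if i ∈ T then (u - u') ^ 2 else (u - w') ^ 2)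
      else (if i ∈ T then (w - u') ^ 2 else (w - w') ^ 2) := by
    intro i
    simp only [twoValued_apply, Real.dist_eq, sq_abs]
    split_ifs <;> rfl
  simp only [regions, sum_ite, sum_const, nsmul_eq_mul, filter_filter]
  have hST : #{i | i ∈ S ∧ i ∈ T} = #(S ∩ T) := by congr 1; ext; simp
  have hS : #{i | i ∈ S ∧ i ∈ T} + #{i | i ∈ S ∧ i ∉ T} = #S := by
    rw [← card_filter_add_card_filter_not (s := S) (· ∈ T)]
    congr 2 <;> ext <;> simp
  have hT : #{i | i ∈ S ∧ i ∈ T} + #{i | i ∉ S ∧ i ∈ T} = #T := by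
    rw [← card_filter_add_card_filter_not (s := T) (· ∈ S)]
    congr 2 <;> ext <;> simp [and_comm]
  have hall : #{i | i ∈ S ∧ i ∈ T} + #{i | i ∈ S ∧ i ∉ T}
      + (#{i | i ∉ S ∧ i ∈ T} + #{i | i ∉ S ∧ i ∉ T}) = Fintype.card ι := by
    rw [← card_univ, ← card_filter_add_card_filter_not (s := univ) (· ∈ S),
      ← card_filter_add_card_filter_not (s := filter (· ∈ S) univ) (· ∈ T),
      ← card_filter_add_card_filter_not (s := filter (· ∉ S) univ) (· ∈ T)]
    simp only [filter_filter]
  rw [← hST, ← hS, ← hT, ← hall]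
  push_cast
  ring

lemma EuclideanSpace.dist_single_one_single_one {k l : ι} (hkl : k ≠ l) :
    dist (EuclideanSpace.single k (1 : ℝ)) (EuclideanSpace.single l 1) = √2 := by
  rw [single_one_eq_twoValued, single_one_eq_twoValued, dist_twoValued,
    singleton_inter_of_notMem (by simpa using hkl)]
  norm_num

end TwoValued

section Coordinates

variable {s : ℕ}

lemma dim_add_one_eq (hs : 2 ≤ s) : s^3+s^2-s-2+1 = s^2-s-1 + s^3 := by
  have h2 : 2 * s ≤ s^2 := by nlinarith
  have h3 : 1 ≤ s^3 := Nat.one_le_pow _ _ (by omega)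
  generalize s^2 = b at *
  generalize s^3 = c at *
  omega

lemma natCast_sq_sub_sub_one (hs : 2 ≤ s) : ((s^2-s-1 : ℕ) : ℝ) = (s:ℝ)^2 - s - 1 := by
  have h : s + 1 ≤ s^2 := by nlinarith
  rw [Nat.sub_sub, Nat.cast_sub h]
  push_cast
  ring

lemma natCast_dim_add_one (hs : 2 ≤ s) : ((s^3+s^2-s-2+1 : ℕ) : ℝ) = (s:ℝ)^3 + s^2 - s - 1 := by
  rw [dim_add_one_eq hs]
  push_cast [natCast_sq_sub_sub_one hs]
  ring

def blockEmb (s : ℕ) : Fin (s^3) ↪ Fin (s^3+s^2-s-2+1) where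
  toFun j := ⟨s^2-s-1+j, by
    rcases Nat.lt_or_ge s 2 with h | h
    · interval_cases s <;> omega
    · rw [dim_add_one_eq h]; omega⟩
  inj' a b h := by
    simp only [Fin.mk.injEq, Nat.add_left_cancel_iff] at h
    exact Fin.ext h

@[simp] lemma val_blockEmb (j : Fin (s^3)) : (blockEmb s j : ℕ) = s^2-s-1+j := rfl

def initSegment (n m : ℕ) : Finset (Fin n) := {i | (i : ℕ) < m}

lemma card_initSegment {n m : ℕ} (hm : m ≤ n) : #(initSegment n m) = m := by
  rw [initSegment, Fin.card_filter_val_lt, min_eq_right hm]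

lemma initSegment_subset {n m m' : ℕ} (h : m ≤ m') : initSegment n m ⊆ initSegment n m' :=
  fun i hi => by simp only [initSegment, mem_filter, mem_univ, true_and] at hi ⊢; omega

def designSupport (s : ℕ) (B : Finset (Fin (s^3))) : Finset (Fin (s^3+s^2-s-2+1)) :=
  initSegment _ (s - 1) ∪ B.map (blockEmb s)

lemma designVec_eq_twoValued (B : Finset (Fin (s^3))) :
    designVec s B = twoValued (designSupport s B) (1/(s+1)) (-(1/(s*(s+1)))) := by
  ext i
  refine if_congr ?_ rfl rfl
  simp [designSupport, initSegment, Fin.ext_iff, eq_comm]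

lemma x0vec_eq_twoValued :
    x0vec s = twoValued (initSegment _ (s^2-s-1)) (-(1/(s+1))) (1/(s*(s+1))) := by
  ext i
  simp [x0vec, initSegment]

lemma disjoint_initSegment_map_blockEmb {m : ℕ} (hm : m ≤ s^2-s-1) (B : Finset (Fin (s^3))) :
    Disjoint (initSegment _ m) (B.map (blockEmb s)) := by
  rw [disjoint_left]
  intro i hi hi'
  obtain ⟨j, -, rfl⟩ := mem_map.1 hi'
  simp only [initSegment, mem_filter, mem_univ, true_and, val_blockEmb] at hi
  omega

lemma sub_one_le_sq_sub_sub_one (hs : 2 ≤ s) : s - 1 ≤ s^2-s-1 := by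
  have : 2 * s ≤ s^2 := by nlinarith
  omega

lemma card_designSupport (hs : 2 ≤ s) (B : Finset (Fin (s^3))) :
    #(designSupport s B) = s - 1 + #B := by
  rw [designSupport, card_union_of_disjoint
      (disjoint_initSegment_map_blockEmb (sub_one_le_sq_sub_sub_one hs) B),
    card_map, card_initSegment (by rw [dim_add_one_eq hs]; have := sub_one_le_sq_sub_sub_one hs; omega)]

lemma designSupport_inter (B B' : Finset (Fin (s^3))) :
    designSupport s B ∩ designSupport s B' = designSupport s (B ∩ B') := by
  rw [designSupport, designSupport, designSupport, ← union_inter_distrib_left, map_inter]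

lemma designSupport_inter_initSegment (hs : 2 ≤ s) (B : Finset (Fin (s^3))) :
    designSupport s B ∩ initSegment _ (s^2-s-1) = initSegment _ (s - 1) := by
  rw [designSupport, union_inter_distrib_right,
    inter_eq_left.2 (initSegment_subset (sub_one_le_sq_sub_sub_one hs)),
    disjoint_iff_inter_eq_empty.1 (disjoint_initSegment_map_blockEmb le_rfl B).symm, union_empty]

end Coordinates

section Distances

variable {s : ℕ}

def twoDists (s : ℕ) : Set ℝ := {√2, √(2*((s:ℝ)-1)/(s:ℝ))}

lemma ne_of_dist_mem_twoDists {E : Type*} [PseudoMetricSpace E] (hs : 2 ≤ s) {x y : E}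
    (h : dist x y ∈ twoDists s) : x ≠ y := by
  rintro rfl
  have hs' : (2:ℝ) ≤ s := by exact_mod_cast hs
  rw [dist_self] at h
  rcases h with h | h
  · exact (Real.sqrt_pos.2 two_pos).ne h
  · exact (Real.sqrt_pos.2 (div_pos (by linarith) (by linarith))).ne h

lemma dist_single_designVec_mem (hs : 2 ≤ s) (k : Fin (s^3+s^2-s-2+1))
    {B : Finset (Fin (s^3))} (hB : #B = s^2) :
    dist (EuclideanSpace.single k (1:ℝ)) (designVec s B) ∈ twoDists s := by
  have hs' : (2:ℝ) ≤ s := by exact_mod_cast hs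
  rw [single_one_eq_twoValued, designVec_eq_twoValued, dist_twoValued, Fintype.card_fin,
    card_singleton, card_designSupport hs, hB, natCast_dim_add_one hs]
  by_cases hk : k ∈ designSupport s B
  · rw [singleton_inter_of_mem hk, card_singleton]
    refine Or.inr (congrArg Real.sqrt ?_)
    push_cast [Nat.cast_pred (by omega : 0 < s)]
    field_simp
    ring
  · rw [singleton_inter_of_notMem hk, card_empty]
    refine Or.inl (congrArg Real.sqrt ?_)
    push_cast [Nat.cast_pred (by omega : 0 < s)]
    field_simp
    ring

lemma dist_single_x0vec_mem (hs : 2 ≤ s) (k : Fin (s^3+s^2-s-2+1)) :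
    dist (EuclideanSpace.single k (1:ℝ)) (x0vec s) ∈ twoDists s := by
  have hs' : (2:ℝ) ≤ s := by exact_mod_cast hs
  rw [single_one_eq_twoValued, x0vec_eq_twoValued, dist_twoValued, Fintype.card_fin,
    card_singleton, card_initSegment (by rw [dim_add_one_eq hs]; omega), natCast_dim_add_one hs,
    natCast_sq_sub_sub_one hs]
  by_cases hk : k ∈ initSegment _ (s^2-s-1)
  · rw [singleton_inter_of_mem hk, card_singleton]
    refine Or.inl (congrArg Real.sqrt ?_)
    push_cast
    field_simp
    ring
  · rw [singleton_inter_of_notMem hk, card_empty]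
    refine Or.inr (congrArg Real.sqrt ?_)
    push_cast
    field_simp
    ring

lemma dist_designVec_designVec (hs : 2 ≤ s) (B B' : Finset (Fin (s^3))) :
    dist (designVec s B) (designVec s B') = √((#B + #B' - 2 * #(B ∩ B')) / s^2) := by
  have hs' : (2:ℝ) ≤ s := by exact_mod_cast hs
  rw [designVec_eq_twoValued, designVec_eq_twoValued, dist_twoValued, designSupport_inter,
    card_designSupport hs, card_designSupport hs, card_designSupport hs]
  congr 1
  push_cast
  field_simp
  ring

lemma dist_designVec_x0vec (hs : 2 ≤ s) {B : Finset (Fin (s^3))} (hB : #B = s^2) :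
    dist (designVec s B) (x0vec s) = √(2*((s:ℝ)-1)/(s:ℝ)) := by
  have hs' : (2:ℝ) ≤ s := by exact_mod_cast hs
  rw [designVec_eq_twoValued, x0vec_eq_twoValued, dist_twoValued,
    designSupport_inter_initSegment hs, card_designSupport hs, hB, Fintype.card_fin,
    card_initSegment (by rw [dim_add_one_eq hs]; have := sub_one_le_sq_sub_sub_one hs; omega),
    card_initSegment (by rw [dim_add_one_eq hs]; omega),
    natCast_dim_add_one hs, natCast_sq_sub_sub_one hs]
  congr 1
  push_cast [Nat.cast_pred (by omega : 0 < s)]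
  field_simp
  ring

lemma dist_designVec_designVec_mem (hs : 2 ≤ s) {B B' : Finset (Fin (s^3))} (hB : #B = s^2)
    (hB' : #B' = s^2) (hBB' : #(B ∩ B') = 0 ∨ #(B ∩ B') = s) :
    dist (designVec s B) (designVec s B') ∈ twoDists s := by
  have hs' : (2:ℝ) ≤ s := by exact_mod_cast hs
  rw [dist_designVec_designVec hs, hB, hB']
  rcases hBB' with h | h <;> rw [h]
  · refine Or.inl (congrArg Real.sqrt ?_)
    push_cast
    field_simp
    ring
  · refine Or.inr (congrArg Real.sqrt ?_)
    push_cast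
    field_simp
    ring

end Distances

lemma single_mem_Hplane (d : ℕ) (k : Fin (d+1)) : EuclideanSpace.single k (1:ℝ) ∈ Hplane d := by
  simp [Hplane, single_one_eq_twoValued]

lemma designVec_mem_Hplane {s : ℕ} (hs : 2 ≤ s) {B : Finset (Fin (s^3))} (hB : #B = s^2) :
    designVec s B ∈ Hplane (s^3+s^2-s-2) := by
  have hs' : (2:ℝ) ≤ s := by exact_mod_cast hs
  change ∑ i, designVec s B i = 1
  rw [designVec_eq_twoValued, sum_twoValued, card_designSupport hs,
    hB, Fintype.card_fin, natCast_dim_add_one hs]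
  push_cast [Nat.cast_pred (by omega : 0 < s)]
  field_simp
  ring

lemma x0vec_mem_Hplane {s : ℕ} (hs : 2 ≤ s) : x0vec s ∈ Hplane (s^3+s^2-s-2) := by
  have hs' : (2:ℝ) ≤ s := by exact_mod_cast hs
  change ∑ i, x0vec s i = 1
  rw [x0vec_eq_twoValued, sum_twoValued, Fintype.card_fin,
    card_initSegment (by rw [dim_add_one_eq hs]; omega), natCast_dim_add_one hs, natCast_sq_sub_sub_one hs]
  field_simp
  ring

section Configuration

variable {s : ℕ} {𝔅 : Finset (Finset (Fin (s^3)))}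

def configuration (s : ℕ) (𝔅 : Finset (Finset (Fin (s^3)))) :
    Set (EuclideanSpace ℝ (Fin (s^3+s^2-s-2+1))) :=
  simplex (s^3+s^2-s-2) ∪ designVec s '' ↑𝔅 ∪ {x0vec s}

lemma configuration_subset_Hplane (hs : 2 ≤ s) (hblock : ∀ B ∈ 𝔅, #B = s^2) :
    configuration s 𝔅 ⊆ Hplane (s^3+s^2-s-2) := by
  rintro x ((⟨k, rfl⟩ | ⟨B, hB, rfl⟩) | rfl)
  exacts [single_mem_Hplane _ k, designVec_mem_Hplane hs (hblock B hB), x0vec_mem_Hplane hs]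

lemma distSet_configuration_subset (hs : 2 ≤ s) (hblock : ∀ B ∈ 𝔅, #B = s^2)
    (hqs : ∀ B₁ ∈ 𝔅, ∀ B₂ ∈ 𝔅, B₁ ≠ B₂ → #(B₁ ∩ B₂) = 0 ∨ #(B₁ ∩ B₂) = s) :
    distSet (configuration s 𝔅) ⊆ twoDists s := by
  rintro r ⟨x, hx, y, hy, hxy, rfl⟩
  rcases hx with (⟨k, rfl⟩ | ⟨B, hB, rfl⟩) | rfl <;>
    rcases hy with (⟨l, rfl⟩ | ⟨B', hB', rfl⟩) | rfl
  · exact Or.inl (EuclideanSpace.dist_single_one_single_one fun h => hxy (h ▸ rfl))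
  · exact dist_single_designVec_mem hs k (hblock B' hB')
  · exact dist_single_x0vec_mem hs k
  · rw [dist_comm]
    exact dist_single_designVec_mem hs l (hblock B hB)
  · exact dist_designVec_designVec_mem hs (hblock B hB) (hblock B' hB')
      (hqs B hB B' hB' fun h => hxy (h ▸ rfl))
  · exact Or.inr (dist_designVec_x0vec hs (hblock B hB))
  · rw [dist_comm]
    exact dist_single_x0vec_mem hs l
  · rw [dist_comm]
    exact Or.inr (dist_designVec_x0vec hs (hblock B' hB'))
  · exact absurd rfl hxy

lemma twoDists_subset_distSet_configuration (hs : 2 ≤ s) (hblock : ∀ B ∈ 𝔅, #B = s^2)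
    (h𝔅 : 𝔅.Nonempty) :
    twoDists s ⊆ distSet (configuration s 𝔅) := by
  have hlast : (0 : Fin (s^3+s^2-s-2+1)) ≠ Fin.last _ := by
    have : s + 2 ≤ s^2 := by nlinarith
    have : 1 ≤ s^3 := Nat.one_le_pow _ _ (by omega)
    simp only [ne_eq, Fin.ext_iff, Fin.val_zero, Fin.val_last]
    omega
  obtain ⟨B, hB⟩ := h𝔅
  have h1 := EuclideanSpace.dist_single_one_single_one hlast
  have h2 := dist_designVec_x0vec hs (hblock B hB)
  rintro r (rfl | rfl)
  · exact ⟨_, .inl (.inl ⟨0, rfl⟩), _, .inl (.inl ⟨_, rfl⟩),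
      ne_of_dist_mem_twoDists hs (.inl h1), h1⟩
  · exact ⟨_, .inl (.inr ⟨B, hB, rfl⟩), _, .inr rfl, ne_of_dist_mem_twoDists hs (.inr h2), h2⟩

lemma ncard_configuration (hs : 2 ≤ s) (hcard : #𝔅 = s^3 + s^2 + s)
    (hblock : ∀ B ∈ 𝔅, #B = s^2)
    (hqs : ∀ B₁ ∈ 𝔅, ∀ B₂ ∈ 𝔅, B₁ ≠ B₂ → #(B₁ ∩ B₂) = 0 ∨ #(B₁ ∩ B₂) = s) :
    (configuration s 𝔅).ncard = 2*s^2*(s+1) := by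
  have hsimplex : (simplex (s^3+s^2-s-2)).ncard = s^3+s^2-s-2+1 := by
    rw [simplex, Set.ncard_range_of_injective, Nat.card_eq_fintype_card, Fintype.card_fin]
    intro k l h
    by_contra hkl
    exact ne_of_dist_mem_twoDists hs (Or.inl (EuclideanSpace.dist_single_one_single_one hkl)) h
  have hdesign : (designVec s '' ↑𝔅).ncard = s^3+s^2+s := by
    rw [Set.InjOn.ncard_image, Set.ncard_coe_finset, hcard]
    intro B hB B' hB' h
    by_contra hne
    exact ne_of_dist_mem_twoDists hs (dist_designVec_designVec_mem hs (hblock B hB)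
      (hblock B' hB') (hqs B hB B' hB' hne)) h
  have hdisj : Disjoint (simplex (s^3+s^2-s-2)) (designVec s '' ↑𝔅) := by
    rw [Set.disjoint_left]
    rintro _ ⟨k, rfl⟩ ⟨B, hB, h⟩
    exact ne_of_dist_mem_twoDists hs (dist_single_designVec_mem hs k (hblock B hB)) h.symm
  have hx0 : x0vec s ∉ simplex (s^3+s^2-s-2) ∪ designVec s '' ↑𝔅 := by
    rintro (⟨k, h⟩ | ⟨B, hB, h⟩)
    · exact ne_of_dist_mem_twoDists hs (dist_single_x0vec_mem hs k) h
    · exact ne_of_dist_mem_twoDists hs (Or.inr (dist_designVec_x0vec hs (hblock B hB))) h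
  have hfin : (simplex (s^3+s^2-s-2)).Finite := Set.finite_range _
  rw [configuration, Set.ncard_union_eq (Set.disjoint_singleton_right.2 hx0)
      (hfin.union (𝔅.finite_toSet.image _)), Set.ncard_union_eq hdisj hfin,
    hsimplex, hdesign, Set.ncard_singleton, dim_add_one_eq hs]
  have : s + 1 ≤ s^2 := by nlinarith
  have : 2*s^2*(s+1) = s^3 + s^3 + s^2 + s^2 := by ring
  omega

end Configuration

theorem stmt12 (s : ℕ) (hs : 2 ≤ s) (𝔅 : Finset (Finset (Fin (s^3))))
    (hcard : 𝔅.card = s^3 + s^2 + s)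
    (hblock : ∀ B ∈ 𝔅, B.card = s^2)
    (hqs : ∀ B₁ ∈ 𝔅, ∀ B₂ ∈ 𝔅, B₁ ≠ B₂ →
      (B₁ ∩ B₂).card = 0 ∨ (B₁ ∩ B₂).card = s) :
    (simplex (s^3+s^2-s-2) ∪ designVec s '' ↑𝔅 ∪ {x0vec s}) ⊆ Hplane (s^3+s^2-s-2) ∧
    distSet (simplex (s^3+s^2-s-2) ∪ designVec s '' ↑𝔅 ∪ {x0vec s}) =
      {Real.sqrt 2, Real.sqrt (2*((s:ℝ)-1)/(s:ℝ))} ∧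
    (simplex (s^3+s^2-s-2) ∪ designVec s '' ↑𝔅 ∪ {x0vec s}).ncard = 2*s^2*(s+1) := by
  have h𝔅 : 𝔅.Nonempty := card_pos.1 (by rw [hcard]; positivity)
  exact ⟨configuration_subset_Hplane hs hblock,
    (distSet_configuration_subset hs hblock hqs).antisymm
      (twoDists_subset_distSet_configuration hs hblock h𝔅),
    ncard_configuration hs hcard hblock hqs⟩
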